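/- Fix μ > 0, N ≥ 2, ε ∈ (0, 1/2), and set p_0 = 1 − ε, K = N − 1, p(s) = e^{μs}/(e^{μs}+K), q = μ^{-1} log((1−ε)(N−1)/ε). Let f(s) = A + B p(s) + (2s/μ)(1 − 2p(s)). Then the boundary conditions f(q) = 0 and f'(0) = 0 determine A and B uniquely, and the resulting value f(0) equals M_PR = (2/μ²)[ ((N−2)/(N−1))(N p_0 − 1) + (2p_0 − 1) log((1−ε)/(ε/(N−1))) ]. -/

import Mathlib

/-!
The general solution `f A B s = A + B p(s) + g(s)` is affine in `(A, B)`, so the two boundary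
conditions form a triangular linear system: reflection at `0` reads `B p'(0) + g'(0) = 0`, which
fixes `B` because `p'(0) = μK/(1+K)² ≠ 0`, and termination at `q` then fixes `A`. The threshold
`q` is chosen so that `p(q) = 1 - ε`, while `p(0) = 1/N`; substituting these values gives `M_PR`.
-/

open Real

section Logistic

variable {μ K : ℝ}

theorem hasDerivAt_exp_div_exp_add (hK : 0 ≤ K) (s : ℝ) :
    HasDerivAt (fun s => exp (μ * s) / (exp (μ * s) + K))
      (μ * K * exp (μ * s) / (exp (μ * s) + K) ^ 2) s := by
  have hexp : HasDerivAt (fun s => exp (μ * s)) (exp (μ * s) * μ) s :=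
    ((hasDerivAt_id s).const_mul μ).exp.congr_deriv (by simp)
  have hden : exp (μ * s) + K ≠ 0 := by positivity
  refine (hexp.div (hexp.add_const K) hden).congr_deriv ?_
  ring

theorem exp_div_exp_add_at_log (hμ : μ ≠ 0) {x : ℝ} (hx : 0 < x) :
    exp (μ * (μ⁻¹ * log x)) / (exp (μ * (μ⁻¹ * log x)) + K) = x / (x + K) := by
  rw [mul_inv_cancel_left₀ hμ, exp_log hx]

end Logistic

theorem boundary_conditions_iff {p g : ℝ → ℝ} {p' g' x₀ : ℝ} (hp : HasDerivAt p p' x₀)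
    (hg : HasDerivAt g g' x₀) (hp' : p' ≠ 0) (q A B : ℝ) :
    (A + B * p q + g q = 0 ∧ deriv (fun s => A + B * p s + g s) x₀ = 0) ↔
      (A, B) = (g' / p' * p q - g q, -g' / p') := by
  have hderiv : HasDerivAt (fun s => A + B * p s + g s) (B * p' + g') x₀ := by
    exact ((hp.const_mul B).const_add A).add hg
  rw [hderiv.deriv, Prod.mk.injEq]
  constructor
  · rintro ⟨hq, hx₀⟩
    have hB : B = -g' / p' := by field_simp; linarith
    refine ⟨?_, hB⟩
    rw [hB] at hq
    linear_combination hq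
  · rintro ⟨rfl, rfl⟩
    constructor
    · ring
    · field_simp; ring

/-- Posner–Rumsey value: with `p₀ = 1 - ε`, `K = N - 1`,
`p s = exp (μ s)/(exp (μ s) + K)`, `q = μ⁻¹ log ((1-ε)(N-1)/ε)` and
`f A B s = A + B * p s + (2 s/μ)(1 - 2 p s)`, the boundary conditions
`f A B q = 0` and `(f A B)' 0 = 0` determine `(A, B)` uniquely, and for any such
`(A, B)` the value `f A B 0` equals
`M_PR = (2/μ²) [ ((N-2)/(N-1)) (N p₀ - 1) + (2 p₀ - 1) log ((1-ε)/(ε/(N-1))) ]`. -/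
theorem statement5 (μ : ℝ) (hμ : 0 < μ) (N : ℕ) (hN : 2 ≤ N)
    (ε : ℝ) (hε : ε ∈ Set.Ioo (0 : ℝ) (1 / 2))
    (p₀ K q : ℝ) (hp₀ : p₀ = 1 - ε) (hK : K = (N : ℝ) - 1)
    (hq : q = μ⁻¹ * Real.log ((1 - ε) * ((N : ℝ) - 1) / ε))
    (p : ℝ → ℝ) (hp : ∀ s, p s = Real.exp (μ * s) / (Real.exp (μ * s) + K))
    (f : ℝ → ℝ → ℝ → ℝ)
    (hf : ∀ A B s, f A B s = A + B * p s + (2 * s / μ) * (1 - 2 * p s))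
    (MPR : ℝ)
    (hMPR : MPR = (2 / μ ^ 2) *
      (((N : ℝ) - 2) / ((N : ℝ) - 1) * ((N : ℝ) * p₀ - 1)
        + (2 * p₀ - 1) * Real.log ((1 - ε) / (ε / ((N : ℝ) - 1))))) :
    (∃! AB : ℝ × ℝ, f AB.1 AB.2 q = 0 ∧ deriv (f AB.1 AB.2) 0 = 0) ∧
    ∀ A B : ℝ, f A B q = 0 → deriv (f A B) 0 = 0 → f A B 0 = MPR := by
  obtain ⟨hε0, hε2⟩ := hε
  have hN2 : (2 : ℝ) ≤ N := by exact_mod_cast hN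
  have hK0 : 0 < K := by linarith
  have hN1 : (N : ℝ) - 1 ≠ 0 := by linarith
  have hp0 : p 0 = 1 / (1 + K) := by simp [hp, add_comm]
  have hpq : p q = 1 - ε := by
    have hx : 0 < (1 - ε) * ((N : ℝ) - 1) / ε := by apply div_pos _ hε0; nlinarith
    rw [hp, hq, exp_div_exp_add_at_log hμ.ne' hx, hK]
    field_simp
    ring
  have hp' : HasDerivAt p (μ * K / (1 + K) ^ 2) 0 := by
    simpa [funext hp, add_comm] using hasDerivAt_exp_div_exp_add (μ := μ) hK0.le 0
  have hg : HasDerivAt (fun s => 2 * s / μ * (1 - 2 * p s)) (2 / μ * (1 - 2 * p 0)) 0 := by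
    refine ((((hasDerivAt_id (0 : ℝ)).const_mul 2).div_const μ).mul
      ((hp'.const_mul 2).const_sub 1)).congr_deriv ?_
    simp
  have hsol := boundary_conditions_iff hp' hg (by positivity) q
  simp only [← hf] at hsol
  refine ⟨⟨_, (hsol _ _).2 rfl, fun AB h => (hsol AB.1 AB.2).1 h⟩, fun A B hq0 h0 => ?_⟩
  obtain ⟨rfl, rfl⟩ := Prod.mk.inj ((hsol A B).1 ⟨hq0, h0⟩)
  have hlog : (1 - ε) / (ε / ((N : ℝ) - 1)) = (1 - ε) * ((N : ℝ) - 1) / ε := by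
    field_simp
  have hKN : 1 + K = N := by rw [hK]; ring
  rw [hf, hp0, hpq, hMPR, hlog, hq, hp₀, hKN, hK]
  generalize log ((1 - ε) * ((N : ℝ) - 1) / ε) = L
  have hN0 : (N : ℝ) ≠ 0 := by linarith
  field_simp
  ring
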